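/- Suppose x, y satisfy exp((ln y)^ν) < ln x < y^β for fixed 0 < ν and 0 < β < 1/2, and set u = ln x / ln y. Then ln ln x = (ln u)(1 + o(1)) as x → ∞; in particular for every k ≥ 3, ln^{(k)} x = ln^{(k−1)} u + o(1). -/
import Mathlib


/-- `iterLog k x` is the `k`-fold iterated natural logarithm of `x`. -/
noncomputable def iterLog : ℕ → ℝ → ℝ
  | 0, x => x
  | k + 1, x => Real.log (iterLog k x)

/-- Iterated exponential. -/
noncomputable def expIter : ℕ → ℝ
  | 0 => 1
  | n + 1 => Real.exp (expIter n)

lemma one_le_expIter : ∀ n, (1 : ℝ) ≤ expIter n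
  | 0 => le_refl 1
  | n + 1 => Real.one_le_exp (le_trans zero_le_one (one_le_expIter n))

lemma iterLog_add : ∀ (m n : ℕ) (x : ℝ), iterLog (m + n) x = iterLog m (iterLog n x)
  | 0, n, x => by simp [iterLog]
  | m + 1, n, x => by
    have h : m + 1 + n = (m + n) + 1 := by omega
    rw [h]
    show Real.log (iterLog (m + n) x) = Real.log (iterLog m (iterLog n x))
    rw [iterLog_add m n x]

lemma chain : ∀ (n m : ℕ) (a b : ℝ), expIter (n + m) ≤ b → b ≤ a →
    expIter m ≤ iterLog n b ∧ iterLog n b ≤ iterLog n a ∧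
      iterLog n a - iterLog n b ≤ a - b
  | 0, m, a, b, hb, hba => by
    refine ⟨?_, ?_, ?_⟩ <;> simp [iterLog] at * <;> linarith
  | n + 1, m, a, b, hb, hba => by
    have hb' : expIter (n + (m + 1)) ≤ b := by
      have h : n + (m + 1) = n + 1 + m := by omega
      rw [h]; exact hb
    obtain ⟨h1, h2, h3⟩ := chain n (m + 1) a b hb' hba
    have hB1 : (1 : ℝ) ≤ iterLog n b := le_trans (one_le_expIter _) h1
    have hBpos : (0 : ℝ) < iterLog n b := lt_of_lt_of_le one_pos hB1
    have hApos : (0 : ℝ) < iterLog n a := lt_of_lt_of_le hBpos h2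
    refine ⟨?_, ?_, ?_⟩
    · show expIter m ≤ Real.log (iterLog n b)
      have : Real.log (expIter (m + 1)) ≤ Real.log (iterLog n b) :=
        Real.log_le_log (lt_of_lt_of_le zero_lt_one (one_le_expIter _)) h1
      rwa [show expIter (m + 1) = Real.exp (expIter m) from rfl, Real.log_exp] at this
    · exact Real.log_le_log hBpos h2
    · show Real.log (iterLog n a) - Real.log (iterLog n b) ≤ a - b
      have hd : Real.log (iterLog n a) - Real.log (iterLog n b) =
          Real.log (iterLog n a / iterLog n b) :=
        (Real.log_div (ne_of_gt hApos) (ne_of_gt hBpos)).symm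
      have hle : Real.log (iterLog n a / iterLog n b) ≤ iterLog n a / iterLog n b - 1 :=
        Real.log_le_sub_one_of_pos (div_pos hApos hBpos)
      have hdiv : iterLog n a / iterLog n b - 1 ≤ iterLog n a - iterLog n b := by
        rw [div_sub_one (ne_of_gt hBpos), div_le_iff₀ hBpos]
        nlinarith
      linarith [hd ▸ hle, h3]

lemma log_le_of_sq (c t : ℝ) (hc : 0 < c) (ht : (2 / c) ^ 2 ≤ t) : Real.log t ≤ c * t := by
  have h2c : (0 : ℝ) ≤ 2 / c := by positivity
  have htpos : 0 < t := lt_of_lt_of_le (by positivity) ht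
  have hsq : 2 / c ≤ Real.sqrt t := by
    have := Real.sqrt_le_sqrt ht
    rwa [Real.sqrt_sq h2c] at this
  have hsqrt_sq : Real.sqrt t ^ 2 = t := Real.sq_sqrt htpos.le
  have hlog : Real.log t = 2 * Real.log (Real.sqrt t) := by
    rw [Real.log_sqrt htpos.le]; ring
  have hbound : Real.log (Real.sqrt t) ≤ Real.sqrt t - 1 :=
    Real.log_le_sub_one_of_pos (Real.sqrt_pos.mpr htpos)
  have hcs : 2 ≤ c * Real.sqrt t := by
    have := mul_le_mul_of_nonneg_left hsq hc.le
    rwa [mul_div_cancel₀ _ (ne_of_gt hc)] at this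
  have hspos : 0 < Real.sqrt t := Real.sqrt_pos.mpr htpos
  nlinarith [hbound, hcs, hsqrt_sq, hspos]

set_option maxHeartbeats 2000000 in
/-- If `exp((ln y)^ν) < ln x < y^β` with `ν > 0`, `0 < β < 1/2`, and `u = ln x / ln y`,
then `ln ln x = (ln u)(1 + o(1))` as `x → ∞`; in particular for every `k ≥ 3`,
`ln^{(k)} x = ln^{(k-1)} u + o(1)`. -/
theorem stmt_17 (ν β : ℝ) (hν : 0 < ν) (hβ0 : 0 < β) (hβ : β < 1 / 2) :
    ∀ ε > 0, ∀ k : ℕ, 3 ≤ k → ∃ x₀ : ℝ, ∀ x y : ℝ, x₀ < x →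
      Real.exp ((Real.log y) ^ ν) < Real.log x → Real.log x < y ^ β →
      |Real.log (Real.log x) - Real.log (Real.log x / Real.log y)| ≤
          ε * Real.log (Real.log x / Real.log y) ∧
      |iterLog k x - iterLog (k - 1) (Real.log x / Real.log y)| ≤ ε := by
  intro ε hε k hk
  obtain ⟨n, rfl⟩ : ∃ n, k = n + 3 := ⟨k - 3, by omega⟩
  set c := ν * min 1 ε / 2 with hc
  have hcpos : 0 < c := by
    have : 0 < min 1 ε := lt_min one_pos hε
    positivity
  set M := max (Real.exp (expIter n + 1)) (max 1 ((2 / c) ^ 2)) with hM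
  refine ⟨Real.exp (Real.exp M), ?_⟩
  intro x y hx hexp hpow
  have hM1 : (1 : ℝ) ≤ M := le_trans (le_max_left _ _) (le_max_right _ _)
  -- L = log x
  have hLpos' : Real.exp M < Real.log x := by
    have h0 : (0 : ℝ) < Real.exp (Real.exp M) := Real.exp_pos _
    have := Real.log_lt_log h0 hx
    rwa [Real.log_exp] at this
  have hLpos : 0 < Real.log x := lt_trans (Real.exp_pos _) hLpos'
  set L := Real.log x with hLdef
  set s := Real.log L with hsdef
  have hsM : M < s := by
    have := Real.log_lt_log (Real.exp_pos M) hLpos'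
    rwa [Real.log_exp] at this
  have hs1 : (1 : ℝ) < s := lt_of_le_of_lt hM1 hsM
  have hspos : 0 < s := lt_trans one_pos hs1
  set w := Real.log y with hwdef
  -- From L < y^β : s < w * β
  have hywβ : y ^ β ≤ Real.exp (w * β) := by
    rcases lt_trichotomy y 0 with hy | hy | hy
    · rw [Real.rpow_def_of_neg hy]
      have hcos : Real.cos (β * Real.pi) ≤ 1 := Real.cos_le_one _
      have := Real.exp_pos (Real.log y * β)
      nlinarith
    · rw [hy, Real.zero_rpow (ne_of_gt hβ0)]
      exact (Real.exp_pos _).le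
    · rw [Real.rpow_def_of_pos hy]
  have hswβ : s < w * β := by
    have h1 : Real.exp s < Real.exp (w * β) := by
      rw [hsdef, Real.exp_log hLpos]
      exact lt_of_lt_of_le hpow hywβ
    exact Real.exp_lt_exp.mp h1
  have hw : s / β < w := (div_lt_iff₀ hβ0).mpr (by linarith [hswβ])
  have hw2 : 2 < w := by
    have h1 : (2 : ℝ) < 1 / β := by
      rw [lt_div_iff₀ hβ0]; linarith
    have h2 : 1 / β ≤ s / β := by gcongr
    linarith
  have hwpos : 0 < w := by linarith
  -- From exp(w^ν) < L : ν * log w < log s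
  have hwνs : w ^ ν < s := by
    have h1 : Real.exp (w ^ ν) < Real.exp s := by
      rw [hsdef, Real.exp_log hLpos]; exact hexp
    exact Real.exp_lt_exp.mp h1
  have hlogw_lt : Real.log w < Real.log s / ν := by
    have h1 : Real.log (w ^ ν) < Real.log s :=
      Real.log_lt_log (Real.rpow_pos_of_pos hwpos ν) hwνs
    rw [Real.log_rpow hwpos] at h1
    rw [lt_div_iff₀ hν]; linarith [h1]
  have hlogw_pos : 0 < Real.log w := Real.log_pos (by linarith)
  set s' := Real.log s with hs'def
  have hs'nonneg : 0 ≤ s' := Real.log_nonneg hs1.le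
  -- smallness of s'
  have hsc : (2 / c) ^ 2 ≤ s :=
    le_of_lt (lt_of_le_of_lt (le_trans (le_max_right _ _) (le_max_right _ _)) hsM)
  have hs'c : s' ≤ c * s := log_le_of_sq c s hcpos hsc
  have hmin1 : min 1 ε ≤ 1 := min_le_left _ _
  have hminε : min 1 ε ≤ ε := min_le_right _ _
  have hcν1 : c ≤ ν / 2 := by
    rw [hc]
    nlinarith [hmin1, hν.le]
  have hcνε : c ≤ ν * ε / 2 := by
    rw [hc]
    nlinarith [hminε, hν.le]
  have hs'half : s' / ν ≤ s / 2 := by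
    have h1 : s' ≤ ν / 2 * s := le_trans hs'c (mul_le_mul_of_nonneg_right hcν1 hspos.le)
    rw [div_le_div_iff₀ hν (by norm_num : (0:ℝ) < 2)]
    nlinarith
  have hs'ε : s' ≤ ν * ε / 2 * s :=
    le_trans hs'c (mul_le_mul_of_nonneg_right hcνε hspos.le)
  -- u and log u
  set u := L / w with hudef
  have hupos : 0 < u := div_pos hLpos hwpos
  have hlogu : Real.log u = s - Real.log w := by
    rw [hudef, Real.log_div (ne_of_gt hLpos) (ne_of_gt hwpos), hsdef]
  have hlogu_lb : s / 2 ≤ Real.log u := by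
    rw [hlogu]; linarith [hlogw_lt, hs'half]
  have hlogu_pos : 0 < Real.log u := lt_of_lt_of_le (by linarith) hlogu_lb
  have hlogu_lt : Real.log u < s := by rw [hlogu]; linarith
  -- Goal 1
  have hgoal1 : s - Real.log u ≤ ε * Real.log u := by
    rw [hlogu]
    have h1 : Real.log w ≤ ε / 2 * s := by
      have := hlogw_lt
      have h2 : s' / ν ≤ ε / 2 * s := by
        rw [div_le_iff₀ hν] at *
        nlinarith [hs'ε]
      linarith
    nlinarith [hlogu_lb, hε.le]
  constructor
  · rw [abs_of_pos (by rw [hlogu]; linarith [hlogw_pos] : (0:ℝ) < Real.log (Real.log x) - Real.log (Real.log x / Real.log y))]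
    exact hgoal1
  -- Goal 2
  · have hk1 : n + 3 - 1 = n + 2 := by omega
    rw [hk1]
    have hsplit1 : iterLog (n + 3) x = iterLog n (iterLog 3 x) := iterLog_add n 3 x
    have hsplit2 : iterLog (n + 2) u = iterLog n (iterLog 2 u) := iterLog_add n 2 _
    have ha : iterLog 3 x = s' := rfl
    have hbv : iterLog 2 u = Real.log (Real.log u) := rfl
    have hba : Real.log (Real.log u) ≤ s' := Real.log_le_log hlogu_pos hlogu_lt.le
    have hexpb : expIter (n + 0) ≤ Real.log (Real.log u) := by
      rw [Nat.add_zero]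
      have h1 : expIter n + 1 ≤ s' := by
        have hs2 : Real.exp (expIter n + 1) ≤ s := le_of_lt (lt_of_le_of_lt (le_max_left _ _) hsM)
        have h2 := Real.log_le_log (Real.exp_pos _) hs2
        rwa [Real.log_exp] at h2
      have hlog2 : Real.log 2 ≤ 1 := by
        have := Real.log_le_sub_one_of_pos (by norm_num : (0:ℝ) < 2)
        linarith
      have h3 : Real.log (s / 2) ≤ Real.log (Real.log u) :=
        Real.log_le_log (by linarith) hlogu_lb
      have h4 : Real.log (s / 2) = s' - Real.log 2 := by
        rw [hs'def, Real.log_div (ne_of_gt hspos) (by norm_num)]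
      linarith
    have hab : s' - Real.log (Real.log u) ≤ ε := by
      have hd : s' - Real.log (Real.log u) = Real.log (s / Real.log u) := by
        rw [hs'def, Real.log_div (ne_of_gt hspos) (ne_of_gt hlogu_pos)]
      have hle : Real.log (s / Real.log u) ≤ s / Real.log u - 1 :=
        Real.log_le_sub_one_of_pos (div_pos hspos hlogu_pos)
      have hdiv : s / Real.log u - 1 ≤ ε := by
        rw [div_sub_one (ne_of_gt hlogu_pos), div_le_iff₀ hlogu_pos]
        linarith [hgoal1]
      linarith [hd ▸ hle]
    obtain ⟨h1, h2, h3⟩ := chain n 0 s' (Real.log (Real.log u)) hexpb hba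
    rw [hsplit1, hsplit2, ha, hbv]
    rw [abs_le]
    constructor
    · linarith [h2]
    · linarith [h3, hab]
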